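/- arXiv:1804.06058 — 4 statements merged into one kernel-verified Lean document; each statement's English description precedes it below -/
import Mathlib

section
/- Let C be an F₂[U]-chain complex of width at least 2Δ with Δ ≥ 1 (every nonzero term of the differential is divisible by U^Δ), and let σ ∈ C be a cycle not divisible by U. Then the classes [U^i σ] for 0 ≤ i < Δ are nonzero in H_*(C), and the class [σ] is not in the image of multiplication by U on H_*(C). -/
/-!
Every boundary is divisible by `U^Δ`. If `U^i σ` (with `i < Δ`) or `σ + U y` were a boundary,
then cancelling `U^i` (possible since `C` is free, hence `U`-torsion-free), respectively moving
`U y` to the other side, would exhibit `σ` as a multiple of `U`.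
-/

open Polynomial

section

variable {R M : Type*}

theorem exists_eq_smul_of_pow_smul_eq_pow_smul [Monoid R] [MulAction R M] {x : R} {i n : ℕ}
    (hreg : IsSMulRegular M (x ^ i)) (hin : i < n) {σ w : M} (h : x ^ i • σ = x ^ n • w) :
    ∃ τ, σ = x • τ :=
  ⟨x ^ (n - i - 1) • w, hreg <| by
    change x ^ i • σ = x ^ i • x • x ^ (n - i - 1) • w
    rw [h, smul_smul, smul_smul, ← pow_succ, ← pow_add]
    congr 2
    omega⟩

theorem exists_eq_smul_of_add_smul_eq_pow_smul [Ring R] [AddCommGroup M] [Module R M] {x : R}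
    {n : ℕ} (hn : 1 ≤ n) {σ y w : M} (h : σ + x • y = x ^ n • w) : ∃ τ, σ = x • τ :=
  ⟨x ^ (n - 1) • w - y, by
    rw [smul_sub, smul_smul, ← pow_succ', Nat.sub_add_cancel hn, ← h, add_sub_cancel_right]⟩

end

theorem stmt9_general (ι : Type) (Δ : ℕ) (hΔ : 1 ≤ Δ)
    (d : (ι → Polynomial (ZMod 2)) →ₗ[Polynomial (ZMod 2)] (ι → Polynomial (ZMod 2)))
    (hwidth : ∀ v, ∃ w, d v = (X : Polynomial (ZMod 2)) ^ Δ • w)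
    (σ : ι → Polynomial (ZMod 2))
    (hσU : ¬ ∃ τ, σ = (X : Polynomial (ZMod 2)) • τ) :
    (∀ i < Δ, ¬ ∃ v, d v = (X : Polynomial (ZMod 2)) ^ i • σ) ∧
    (∀ y, d y = 0 → ¬ ∃ v, d v = σ + (X : Polynomial (ZMod 2)) • y) := by
  constructor
  · rintro i hi ⟨v, hv⟩
    obtain ⟨w, hw⟩ := hwidth v
    have hreg : IsSMulRegular (ι → (ZMod 2)[X]) ((X : (ZMod 2)[X]) ^ i) :=
      .of_ne_zero (pow_ne_zero i X_ne_zero)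
    exact hσU (exists_eq_smul_of_pow_smul_eq_pow_smul hreg hi (hv ▸ hw))
  · rintro y - ⟨v, hv⟩
    obtain ⟨w, hw⟩ := hwidth v
    exact hσU (exists_eq_smul_of_add_smul_eq_pow_smul hΔ (hv ▸ hw))

theorem stmt9 (ι : Type) [Fintype ι] (Δ : ℕ) (hΔ : 1 ≤ Δ)
    (d : (ι → Polynomial (ZMod 2)) →ₗ[Polynomial (ZMod 2)] (ι → Polynomial (ZMod 2)))
    (hd2 : ∀ v, d (d v) = 0)
    (hwidth : ∀ v, ∃ w, d v = (X : Polynomial (ZMod 2)) ^ Δ • w)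
    (σ : ι → Polynomial (ZMod 2))
    (hσcycle : d σ = 0)
    (hσU : ¬ ∃ τ, σ = (X : Polynomial (ZMod 2)) • τ) :
    (∀ i < Δ, ¬ ∃ v, d v = (X : Polynomial (ZMod 2)) ^ i • σ) ∧
    (∀ y, d y = 0 → ¬ ∃ v, d v = σ + (X : Polynomial (ZMod 2)) • y) :=
  stmt9_general ι Δ hΔ d hwidth σ hσU
end

section
/- Consider the F₂[U]-complex Σ_n representing X_{i₁} + ... + X_{iₙ} (same-sign sum, i₁ ≥ ... ≥ iₙ): generators e_k, Je_k for 0 ≤ k < n and a single e_n, with Maslov grading M(e_k) = M(Je_k) = k - 2(i₁+...+i_k), differential ∂e_k = U^{i_k}(e_{k-1} + Je_{k-1}) for 1 ≤ k ≤ n (with Je_n = e_n) and ∂e₀ = 0, extended J-equivariantly. Then the U-torsion submodule of H_*(Σ_n) is the direct sum ⊕_{k=1}^{n} T_{d_k}(i_k) of torsion towers generated by the classes [e_{k-1} + Je_{k-1}], where d_k = (k-1) - 2(i₁ + ... + i_{k-1}); that is, the k-th tower has length i_k and top grading d_k. -/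
/-!
The complex `Σ_n` representing the same-sign sum `X_{i₁} + ⋯ + X_{iₙ}`
(`i₁ ≥ ⋯ ≥ iₙ ≥ 1`): generators `e_k` (`0 ≤ k ≤ n`) and `Je_k` (`0 ≤ k < n`,
with `Je_n = e_n`), gradings `M(e_k) = k - 2(i₁ + ⋯ + i_k)`, differential
`∂e_k = ∂(Je_k) = U^{i_k}(e_{k-1} + Je_{k-1})`, `∂e₀ = 0`.  We use zero-based
indexing: `iL k` (`k : Fin n`) is `i_{k+1}`, and the module is
`(Fin (n+1) → F₂[U]) × (Fin n → F₂[U])` (first factor: `e`-coordinates;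
second: `Je`-coordinates).  Then the `U`-torsion submodule of `H_*(Σ_n)` is
`⊕_{k} T_{d_k}(iL k)`, the `k`-th tower generated by the class of
`e_k + Je_k`, of length `iL k` (and with top grading `d_k = M(e_k)`).
-/

open Polynomial

noncomputable section

abbrev Hmlgy {R M : Type} [CommRing R] [AddCommGroup M] [Module R M] (d : M →ₗ[R] M) :=
  ↥(LinearMap.ker d) ⧸ (Submodule.comap (LinearMap.ker d).subtype (LinearMap.range d))

private lemma two_self (p : Polynomial (ZMod 2)) : p + p = 0 := CharTwo.add_self_eq_zero p

private lemma addCancelTwo {a b : Polynomial (ZMod 2)} : a + b = 0 ↔ a = b := by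
  constructor
  · intro h
    have h2 : a + (b + b) = (a + b) + b := (add_assoc a b b).symm
    rwa [two_self, add_zero, h, zero_add] at h2
  · rintro rfl; exact two_self a

private abbrev Vt (n : ℕ) : Type :=
  (Fin (n + 1) → Polynomial (ZMod 2)) × (Fin n → Polynomial (ZMod 2))

private abbrev Ik (m : ℕ) : Ideal (Polynomial (ZMod 2)) :=
  Ideal.span {(X : Polynomial (ZMod 2)) ^ m}

private def Psi (n : ℕ) (hn : 0 < n) (iL : Fin n → ℕ) :
    Vt n →ₗ[Polynomial (ZMod 2)]
      Polynomial (ZMod 2) × (∀ k : Fin n, Polynomial (ZMod 2) ⧸ Ik (iL k)) :=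
  LinearMap.prod
    ((LinearMap.proj (0 : Fin (n + 1))).comp
        (LinearMap.fst (Polynomial (ZMod 2)) (Fin (n + 1) → Polynomial (ZMod 2))
          (Fin n → Polynomial (ZMod 2))) +
      (LinearMap.proj (⟨0, hn⟩ : Fin n)).comp
        (LinearMap.snd (Polynomial (ZMod 2)) (Fin (n + 1) → Polynomial (ZMod 2))
          (Fin n → Polynomial (ZMod 2))))
    (LinearMap.pi fun k =>
      ((Ideal.Quotient.mkₐ (Polynomial (ZMod 2)) (Ik (iL k))).toLinearMap.comp
        ((LinearMap.proj k).comp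
          (LinearMap.snd (Polynomial (ZMod 2)) (Fin (n + 1) → Polynomial (ZMod 2))
            (Fin n → Polynomial (ZMod 2))))))

private lemma Psi_apply (n : ℕ) (hn : 0 < n) (iL : Fin n → ℕ) (v : Vt n) :
    Psi n hn iL v = (v.1 0 + v.2 ⟨0, hn⟩, fun k => Ideal.Quotient.mk (Ik (iL k)) (v.2 k)) := rfl

set_option maxHeartbeats 2000000 in
set_option synthInstance.maxHeartbeats 2000000 in
theorem stmt12 (n : ℕ) (hn : 0 < n) (iL : Fin n → ℕ)
    (hi1 : ∀ k, 1 ≤ iL k) (hmono : ∀ j k : Fin n, j ≤ k → iL k ≤ iL j)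
    (M : Fin (n + 1) → ℤ)
    (hM : ∀ k : Fin (n + 1), M k = (k : ℤ) -
      2 * ∑ j ∈ Finset.univ.filter (fun j : Fin n => (j : ℕ) < (k : ℕ)), (iL j : ℤ))
    (d : ((Fin (n + 1) → Polynomial (ZMod 2)) × (Fin n → Polynomial (ZMod 2)))
      →ₗ[Polynomial (ZMod 2)]
      ((Fin (n + 1) → Polynomial (ZMod 2)) × (Fin n → Polynomial (ZMod 2))))
    (hd : ∀ v, d v =
      (fun j : Fin (n + 1) => if h : (j : ℕ) < n then
          X ^ (iL ⟨(j : ℕ), h⟩) * (v.1 (Fin.succ ⟨(j : ℕ), h⟩) +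
            if h2 : (j : ℕ) + 1 < n then v.2 ⟨(j : ℕ) + 1, h2⟩ else 0)
        else 0,
       fun k : Fin n =>
          X ^ (iL k) * (v.1 (Fin.succ k) +
            if h2 : (k : ℕ) + 1 < n then v.2 ⟨(k : ℕ) + 1, h2⟩ else 0)))
    (z : Fin n → (Fin (n + 1) → Polynomial (ZMod 2)) × (Fin n → Polynomial (ZMod 2)))
    (hz : ∀ k, z k = (Pi.single (Fin.castSucc k) 1, Pi.single k 1)) :
    ∃ hcyc : ∀ k, z k ∈ LinearMap.ker d,
    ∃ hmem : ∀ k, (Submodule.Quotient.mk (⟨z k, hcyc k⟩ : LinearMap.ker d) : Hmlgy d)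
        ∈ Submodule.torsion (Polynomial (ZMod 2)) (Hmlgy d),
    ∃ φ : ↥(Submodule.torsion (Polynomial (ZMod 2)) (Hmlgy d)) ≃ₗ[Polynomial (ZMod 2)]
        (∀ k : Fin n, Polynomial (ZMod 2) ⧸ Ideal.span {(X : Polynomial (ZMod 2)) ^ (iL k)}),
      ∀ k, φ ⟨Submodule.Quotient.mk ⟨z k, hcyc k⟩, hmem k⟩ =
        Pi.single k (Ideal.Quotient.mk (Ideal.span {(X : Polynomial (ZMod 2)) ^ (iL k)}) 1) := by
  classical
  -- the z k are cycles
  have hcyc : ∀ k, z k ∈ LinearMap.ker d := by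
    intro k
    have main : ∀ (j : ℕ) (h : j < n),
        (X : Polynomial (ZMod 2)) ^ (iL ⟨j, h⟩) *
          ((Pi.single (Fin.castSucc k) 1 : Fin (n + 1) → Polynomial (ZMod 2))
            (Fin.succ ⟨j, h⟩) +
          (if h2 : j + 1 < n then (Pi.single k 1 : Fin n → Polynomial (ZMod 2)) ⟨j + 1, h2⟩ else 0))
          = 0 := by
      intro j h
      by_cases hjk : j + 1 = (k : ℕ)
      · have h2 : j + 1 < n := hjk ▸ k.isLt
        rw [dif_pos h2,
          show Fin.succ ⟨j, h⟩ = Fin.castSucc k from by simp [Fin.ext_iff, hjk],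
          show (⟨j + 1, h2⟩ : Fin n) = k from by simp [Fin.ext_iff, hjk],
          Pi.single_eq_same, Pi.single_eq_same, two_self, mul_zero]
      · rw [Pi.single_eq_of_ne (by simp [Fin.ext_iff, hjk] :
          Fin.succ ⟨j, h⟩ ≠ Fin.castSucc k)]
        rcases Nat.lt_or_ge (j + 1) n with h2 | h2
        · rw [dif_pos h2, Pi.single_eq_of_ne (by simp [Fin.ext_iff, hjk]), zero_add, mul_zero]
        · rw [dif_neg (Nat.not_lt.mpr h2), zero_add, mul_zero]
    rw [LinearMap.mem_ker, hd, hz]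
    refine Prod.ext ?_ ?_
    · funext j
      simp only [Prod.fst_zero, Pi.zero_apply]
      by_cases h : (j : ℕ) < n
      · rw [dif_pos h]; exact main (j : ℕ) h
      · rw [dif_neg h]
    · funext j
      simp only [Prod.snd_zero, Pi.zero_apply]
      exact main (j : ℕ) j.isLt
  -- boundaries are killed by Psi
  have hbd : ∀ u : Vt n, Psi n hn iL (d u) = 0 := by
    intro u
    rw [hd, Psi_apply]
    refine Prod.ext ?_ ?_
    · simp only [Prod.fst_zero]
      rw [dif_pos (show ((0 : Fin (n + 1)) : ℕ) < n from hn)]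
      exact two_self _
    · funext k
      simp only [Prod.snd_zero, Pi.zero_apply]
      rw [Ideal.Quotient.eq_zero_iff_mem, Ik, Ideal.mem_span_singleton]
      exact dvd_mul_right _ _
  -- Psi kills the boundary submodule
  have hle : Submodule.comap (LinearMap.ker d).subtype (LinearMap.range d) ≤
      LinearMap.ker ((Psi n hn iL) ∘ₗ (LinearMap.ker d).subtype) := by
    rintro ⟨v, hv⟩ hm
    simp only [Submodule.mem_comap, Submodule.subtype_apply] at hm
    obtain ⟨u, hu⟩ := hm
    simp only [LinearMap.mem_ker, LinearMap.comp_apply, Submodule.subtype_apply]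
    rw [← hu]
    exact hbd u
  -- kernel of Psi on cycles is contained in the boundaries
  have hker : LinearMap.ker ((Psi n hn iL) ∘ₗ (LinearMap.ker d).subtype) ≤
      Submodule.comap (LinearMap.ker d).subtype (LinearMap.range d) := by
    rintro ⟨v, hv⟩ hv0
    simp only [LinearMap.mem_ker, LinearMap.comp_apply, Submodule.subtype_apply] at hv0
    rw [Psi_apply] at hv0
    have hv' : d v = 0 := hv
    rw [hd] at hv'
    have hrel : ∀ (m : ℕ) (hm : m < n), v.1 (Fin.succ ⟨m, hm⟩) =
        (if h2 : m + 1 < n then v.2 ⟨m + 1, h2⟩ else 0) := by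
      intro m hm
      have h := congrFun (congrArg Prod.snd hv') ⟨m, hm⟩
      simp only [Prod.snd_zero, Pi.zero_apply] at h
      exact addCancelTwo.mp ((mul_eq_zero.mp h).resolve_left (pow_ne_zero _ X_ne_zero))
    have h0 : v.1 0 = v.2 ⟨0, hn⟩ := addCancelTwo.mp (congrArg Prod.fst hv0)
    have hdvd : ∀ k : Fin n, ∃ c, v.2 k = (X : Polynomial (ZMod 2)) ^ (iL k) * c := by
      intro k
      have h := congrFun (congrArg Prod.snd hv0) k
      simp only [Prod.snd_zero, Pi.zero_apply] at h
      obtain ⟨c, hc⟩ := (Ideal.mem_span_singleton').mp (Ideal.Quotient.eq_zero_iff_mem.mp h)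
      exact ⟨c, by rw [← hc, mul_comm]⟩
    choose c hc using hdvd
    have hv12 : ∀ (j : Fin (n + 1)) (h : (j : ℕ) < n), v.1 j = v.2 ⟨(j : ℕ), h⟩ := by
      intro j h
      by_cases h0' : (j : ℕ) = 0
      · have hj : j = 0 := Fin.ext h0'
        subst hj
        rw [h0]
        congr 1
      · have hm1 : (j : ℕ) - 1 < n := by omega
        have h2 : (j : ℕ) - 1 + 1 < n := by omega
        have this1 := hrel ((j : ℕ) - 1) hm1
        rw [dif_pos h2] at this1
        have e1 : Fin.succ ⟨(j : ℕ) - 1, hm1⟩ = j := by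
          rw [Fin.ext_iff, Fin.val_succ]
          show (j : ℕ) - 1 + 1 = (j : ℕ)
          omega
        rw [e1] at this1
        rw [this1]
        have e2 : (⟨(j : ℕ) - 1 + 1, h2⟩ : Fin n) = ⟨(j : ℕ), h⟩ := by
          apply Fin.ext
          show (j : ℕ) - 1 + 1 = (j : ℕ)
          omega
        rw [e2]
    have hvn : ∀ (j : Fin (n + 1)), ¬ ((j : ℕ) < n) → v.1 j = 0 := by
      intro j h
      have hm1 : n - 1 < n := by omega
      have this1 := hrel (n - 1) hm1
      rw [dif_neg (by omega : ¬ (n - 1 + 1 < n))] at this1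
      have e1 : Fin.succ ⟨n - 1, hm1⟩ = j := by
        rw [Fin.ext_iff, Fin.val_succ]
        show n - 1 + 1 = (j : ℕ)
        have := j.isLt
        omega
      rw [e1] at this1
      exact this1
    simp only [Submodule.mem_comap, Submodule.subtype_apply]
    refine ⟨((Fin.cases 0 c : Fin (n + 1) → Polynomial (ZMod 2)), 0), ?_⟩
    rw [hd]
    have hE : ∀ k : Fin n,
        (X : Polynomial (ZMod 2)) ^ (iL k) *
          ((Fin.cases 0 c : Fin (n + 1) → Polynomial (ZMod 2)) (Fin.succ k) +
            (if h2 : (k : ℕ) + 1 < n then (0 : Fin n → Polynomial (ZMod 2)) ⟨(k : ℕ) + 1, h2⟩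
              else 0)) = v.2 k := by
      intro k
      dsimp only
      rw [Fin.cases_succ]
      have e2 : (if h2 : (k : ℕ) + 1 < n then (0 : Fin n → Polynomial (ZMod 2)) ⟨(k : ℕ) + 1, h2⟩
          else 0) = 0 := by split <;> rfl
      rw [e2, add_zero, ← hc k]
    refine Prod.ext ?_ ?_
    · funext j
      dsimp only
      by_cases h : (j : ℕ) < n
      · rw [dif_pos h, hv12 j h]
        exact hE ⟨(j : ℕ), h⟩
      · rw [dif_neg h]
        exact (hvn j h).symm
    · funext k
      dsimp only
      exact hE k
  -- the induced map on homology
  let φ₀ : Hmlgy d →ₗ[Polynomial (ZMod 2)]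
      (Polynomial (ZMod 2) × (∀ k : Fin n, Polynomial (ZMod 2) ⧸ Ik (iL k))) :=
    Submodule.liftQ (Submodule.comap (LinearMap.ker d).subtype (LinearMap.range d))
      ((Psi n hn iL) ∘ₗ (LinearMap.ker d).subtype) hle
  have hφmk : ∀ x : LinearMap.ker d,
      φ₀ (Submodule.Quotient.mk x) = Psi n hn iL x.1 := fun x => rfl
  have injφ₀ : Function.Injective φ₀ :=
    LinearMap.ker_eq_bot.mp (Submodule.ker_liftQ_eq_bot _ _ hle hker)
  have surjφ₀ : Function.Surjective φ₀ := by
    have hfs : Function.Surjective ((Psi n hn iL) ∘ₗ (LinearMap.ker d).subtype) := by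
      intro y
      choose r hr using fun k => Ideal.Quotient.mk_surjective (y.2 k)
      refine ⟨⟨((Fin.cases (y.1 + r ⟨0, hn⟩)
        (fun k' => if h2 : (k' : ℕ) + 1 < n then r ⟨(k' : ℕ) + 1, h2⟩ else 0) :
          Fin (n + 1) → Polynomial (ZMod 2)), r), ?_⟩, ?_⟩
      · rw [LinearMap.mem_ker, hd]
        refine Prod.ext ?_ ?_
        · funext j
          simp only [Prod.fst_zero, Pi.zero_apply]
          by_cases h : (j : ℕ) < n
          · rw [dif_pos h, Fin.cases_succ, two_self, mul_zero]
          · rw [dif_neg h]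
        · funext k
          simp only [Prod.snd_zero, Pi.zero_apply]
          rw [Fin.cases_succ, two_self, mul_zero]
      · show Psi n hn iL ((Fin.cases (y.1 + r ⟨0, hn⟩)
            (fun k' => if h2 : (k' : ℕ) + 1 < n then r ⟨(k' : ℕ) + 1, h2⟩ else 0) :
              Fin (n + 1) → Polynomial (ZMod 2)), r) = y
        rw [Psi_apply]
        refine Prod.ext ?_ ?_
        · show (Fin.cases (y.1 + r ⟨0, hn⟩)
            (fun k' => if h2 : (k' : ℕ) + 1 < n then r ⟨(k' : ℕ) + 1, h2⟩ else 0) :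
              Fin (n + 1) → Polynomial (ZMod 2)) 0 + r ⟨0, hn⟩ = y.1
          dsimp only
          rw [Fin.cases_zero, add_assoc, two_self, add_zero]
        · funext k
          exact hr k
    rw [← LinearMap.range_eq_top, Submodule.range_liftQ, LinearMap.range_eq_top]
    exact hfs
  -- torsion membership of the cycle classes
  have hbX : ∀ k : Fin n,
      (X : Polynomial (ZMod 2)) ^ (iL k) • (z k) ∈ LinearMap.range d := by
    intro k
    refine ⟨((Pi.single (Fin.succ k) 1 : Fin (n + 1) → Polynomial (ZMod 2)), 0), ?_⟩
    rw [hd, hz]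
    have hsingle : ∀ j : Fin n,
        (Pi.single (Fin.succ k) 1 : Fin (n + 1) → Polynomial (ZMod 2)) (Fin.succ j)
          = if j = k then 1 else 0 := by
      intro j
      rw [Pi.single_apply]
      by_cases hjk : j = k
      · rw [if_pos (by rw [hjk]), if_pos hjk]
      · rw [if_neg (by simpa [Fin.succ_inj] using hjk), if_neg hjk]
    refine Prod.ext ?_ ?_
    · funext j
      simp only [Prod.smul_fst, Pi.smul_apply, smul_eq_mul]
      by_cases h : (j : ℕ) < n
      · rw [dif_pos h, hsingle ⟨(j : ℕ), h⟩]
        have e2 : (if h2 : (j : ℕ) + 1 < n then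
            (0 : Fin n → Polynomial (ZMod 2)) ⟨(j : ℕ) + 1, h2⟩ else 0) = 0 := by
          split <;> rfl
        rw [e2, add_zero, Pi.single_apply]
        by_cases hjk : (⟨(j : ℕ), h⟩ : Fin n) = k
        · rw [if_pos hjk, hjk, if_pos (show j = Fin.castSucc k from by
            rw [Fin.ext_iff, Fin.coe_castSucc]
            exact Fin.ext_iff.mp hjk)]
        · rw [if_neg hjk, if_neg (show j ≠ Fin.castSucc k from fun e => hjk (by
            rw [Fin.ext_iff]
            rw [Fin.ext_iff, Fin.coe_castSucc] at e
            exact e)), mul_zero, mul_zero]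
      · rw [dif_neg h, Pi.single_apply,
          if_neg (show j ≠ Fin.castSucc k from
            fun e => h (by rw [e, Fin.coe_castSucc]; exact k.isLt)), mul_zero]
    · funext j
      simp only [Prod.smul_snd, Pi.smul_apply, smul_eq_mul]
      rw [hsingle j]
      have e2 : (if h2 : (j : ℕ) + 1 < n then
          (0 : Fin n → Polynomial (ZMod 2)) ⟨(j : ℕ) + 1, h2⟩ else 0) = 0 := by
        split <;> rfl
      rw [e2, add_zero, Pi.single_apply]
      by_cases hjk : j = k
      · rw [if_pos hjk, hjk]
      · rw [if_neg hjk, mul_zero, mul_zero]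
  have hmem : ∀ k, (Submodule.Quotient.mk (⟨z k, hcyc k⟩ : LinearMap.ker d) : Hmlgy d)
      ∈ Submodule.torsion (Polynomial (ZMod 2)) (Hmlgy d) := by
    intro k
    rw [Submodule.mem_torsion_iff]
    refine ⟨⟨(X : Polynomial (ZMod 2)) ^ (iL k),
      mem_nonZeroDivisors_of_ne_zero (pow_ne_zero _ X_ne_zero)⟩, ?_⟩
    rw [Submonoid.smul_def, ← Submodule.Quotient.mk_smul, Submodule.Quotient.mk_eq_zero]
    simp only [Submodule.mem_comap, Submodule.subtype_apply, SetLike.val_smul]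
    exact hbX k
  -- the restriction of φ₀ to the torsion submodule, landing in the towers
  let Φlin : ↥(Submodule.torsion (Polynomial (ZMod 2)) (Hmlgy d)) →ₗ[Polynomial (ZMod 2)]
      (∀ k : Fin n, Polynomial (ZMod 2) ⧸ Ideal.span {(X : Polynomial (ZMod 2)) ^ (iL k)}) :=
    (LinearMap.snd _ _ _) ∘ₗ φ₀ ∘ₗ
      (Submodule.torsion (Polynomial (ZMod 2)) (Hmlgy d)).subtype
  have hΦapp : ∀ x : ↥(Submodule.torsion (Polynomial (ZMod 2)) (Hmlgy d)),
      Φlin x = (φ₀ (x : Hmlgy d)).2 := fun _ => rfl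
  have injΦ : Function.Injective Φlin := by
    rw [injective_iff_map_eq_zero]
    intro x hx
    have hx2 := x.2
    rw [Submodule.mem_torsion_iff] at hx2
    obtain ⟨a, ha⟩ := hx2
    rw [Submonoid.smul_def] at ha
    have h1 : (a : Polynomial (ZMod 2)) • φ₀ (x : Hmlgy d) = 0 := by
      rw [← map_smul, ha, map_zero]
    have h2 : (φ₀ (x : Hmlgy d)).1 = 0 := by
      have h1' := congrArg Prod.fst h1
      simp only [Prod.smul_fst, smul_eq_mul, Prod.fst_zero] at h1'
      exact (mem_nonZeroDivisors_iff.mp a.2).2 _ (by rw [mul_comm]; exact h1')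
    have h3 : φ₀ (x : Hmlgy d) = 0 :=
      Prod.ext h2 ((hΦapp x).symm.trans hx)
    have h4 : (x : Hmlgy d) = 0 := injφ₀ (by rw [h3, map_zero])
    exact Subtype.ext h4
  have surjΦ : Function.Surjective Φlin := by
    intro q
    obtain ⟨y, hy⟩ := surjφ₀ (0, q)
    have hyT : y ∈ Submodule.torsion (Polynomial (ZMod 2)) (Hmlgy d) := by
      rw [Submodule.mem_torsion_iff]
      refine ⟨⟨(X : Polynomial (ZMod 2)) ^ (iL ⟨0, hn⟩),
        mem_nonZeroDivisors_of_ne_zero (pow_ne_zero _ X_ne_zero)⟩, ?_⟩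
      rw [Submonoid.smul_def]
      apply injφ₀
      rw [map_smul, hy, map_zero]
      refine Prod.ext ?_ ?_
      · simp
      · funext k
        simp only [Prod.smul_snd, Pi.smul_apply, Prod.snd_zero, Pi.zero_apply]
        obtain ⟨s, hs⟩ := Ideal.Quotient.mk_surjective (q k)
        rw [← hs,
          show (X : Polynomial (ZMod 2)) ^ (iL ⟨0, hn⟩) •
              Ideal.Quotient.mk (Ik (iL k)) s =
            Ideal.Quotient.mk (Ik (iL k)) ((X : Polynomial (ZMod 2)) ^ (iL ⟨0, hn⟩) * s)
            from rfl,
          Ideal.Quotient.eq_zero_iff_mem]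
        exact Ideal.mem_span_singleton.mpr
          (dvd_mul_of_dvd_left
            (pow_dvd_pow X (hmono ⟨0, hn⟩ k (Fin.le_def.mpr (Nat.zero_le _)))) s)
    refine ⟨⟨y, hyT⟩, ?_⟩
    rw [hΦapp, hy]
  refine ⟨hcyc, hmem, LinearEquiv.ofBijective Φlin (show Function.Bijective Φlin from ⟨injΦ, surjΦ⟩), fun k => ?_⟩
  rw [LinearEquiv.ofBijective_apply, hΦapp, hφmk]
  show (Psi n hn iL (z k)).2 = _
  rw [hz, Psi_apply]
  funext j
  dsimp only
  by_cases hjk : j = k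
  · subst hjk
    rw [Pi.single_eq_same, Pi.single_eq_same]
  · rw [Pi.single_eq_of_ne hjk, Pi.single_eq_of_ne hjk, map_zero]
end
end

section
/- For the complex Σ_n representing the same-sign sum X_{i₁} + ... + X_{iₙ} (as above), the free part of H_*(Σ_n) is a single copy of F₂[U] generated by the class [e₀], and U⁻¹H_*(Σ_n) ≅ F₂[U,U⁻¹]. -/
/-!
The cycles of `Σ_n` are spanned by `e₀`, `Je₀` and the `e_k + Je_k` (`0 < k < n`), the boundaries
by the `U^{i_{k+1}} (e_k + Je_k)`. In characteristic two the augmentation `v ↦ v(e₀) + v(Je₀)`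
kills boundaries, so it induces a surjection `Φ : H_*(Σ_n) → F₂[U]` with `Φ [e₀] = 1`. A cycle in
its kernel is a combination of the `e_k + Je_k` (`k < n`), and `U^{i₁}` times it is a boundary
because `i₁ ≥ i_{k+1}`. Hence `ker Φ` is `U`-torsion: it is the torsion submodule, and `Φ` becomes
an isomorphism once `U` is inverted.
-/

open Polynomial

noncomputable section

open Submodule LinearMap

theorem Submodule.torsionBy_le_torsion' {R M : Type*} [CommSemiring R] [AddCommMonoid M]
    [Module R M] {S : Submonoid R} {a : R} (ha : a ∈ S) : torsionBy R M a ≤ torsion' R M S :=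
  fun _ hx => ⟨⟨a, ha⟩, hx⟩

section TorsionQuotient

variable {R H M : Type*} [CommRing R] [AddCommGroup H] [Module R H] [AddCommGroup M] [Module R M]

theorem Submodule.torsion_eq_ker_of_ker_le (hM : torsion R M = ⊥) (Φ : H →ₗ[R] M)
    (hΦ : ker Φ ≤ torsion R H) : torsion R H = ker Φ := by
  refine le_antisymm (fun x hx => ?_) hΦ
  obtain ⟨a, hax⟩ := (mem_torsion_iff x).mp hx
  have : Φ x ∈ torsion R M := (mem_torsion_iff _).mpr
    ⟨a, by rw [Submonoid.smul_def, ← map_smul, ← Submonoid.smul_def, hax, map_zero]⟩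
  rwa [hM, mem_bot] at this

def LinearMap.quotTorsionEquivOfSurjective (hM : torsion R M = ⊥) (Φ : H →ₗ[R] M)
    (hsurj : Function.Surjective Φ) (hΦ : ker Φ ≤ torsion R H) :
    (H ⧸ torsion R H) ≃ₗ[R] M :=
  (quotEquivOfEq _ _ (torsion_eq_ker_of_ker_le hM Φ hΦ)).trans (Φ.quotKerEquivOfSurjective hsurj)

@[simp]
theorem LinearMap.quotTorsionEquivOfSurjective_mk (hM : torsion R M = ⊥) (Φ : H →ₗ[R] M)
    (hsurj : Function.Surjective Φ) (hΦ : ker Φ ≤ torsion R H) (x : H) :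
    Φ.quotTorsionEquivOfSurjective hM hsurj hΦ (Submodule.Quotient.mk x) = Φ x :=
  rfl

end TorsionQuotient

theorem IsLocalizedModule.map_bijective_of_ker_le_torsion' {R M N M' N' : Type*} [CommRing R]
    [AddCommGroup M] [Module R M] [AddCommGroup N] [Module R N]
    [AddCommGroup M'] [Module R M'] [AddCommGroup N'] [Module R N']
    (S : Submonoid R) (f : M →ₗ[R] M') [IsLocalizedModule S f] (f' : N →ₗ[R] N')
    [IsLocalizedModule S f'] (g : M →ₗ[R] N) (hsurj : Function.Surjective g)
    (hker : ker g ≤ torsion' R M S) : Function.Bijective (map S f f' g) := by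
  refine ⟨?_, map_surjective S f f' g hsurj⟩
  rw [← LinearMap.ker_eq_bot, ker_localizedMap_eq_localized₀_ker, eq_bot_iff]
  rintro _ ⟨m, hm, s, rfl⟩
  exact (mk'_eq_zero' f s).mpr (hker hm)

section HomologyLift

variable {R M N : Type} [CommRing R] [AddCommGroup M] [Module R M] [AddCommGroup N] [Module R N]

def Hmlgy.lift {d : M →ₗ[R] M} (φ : M →ₗ[R] N) (hφ : φ ∘ₗ d = 0) : Hmlgy d →ₗ[R] N :=
  liftQ _ (φ ∘ₗ (ker d).subtype) <| by
    rintro x ⟨y, hy⟩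
    change φ x = 0
    rw [show (x : M) = d y from hy.symm]
    exact LinearMap.congr_fun hφ y

@[simp]
theorem Hmlgy.lift_mk {d : M →ₗ[R] M} (φ : M →ₗ[R] N) (hφ : φ ∘ₗ d = 0) (x : ker d) :
    Hmlgy.lift φ hφ (Submodule.Quotient.mk x) = φ x :=
  rfl

end HomologyLift

local notation "𝔽₂[X]" => Polynomial (ZMod 2)

namespace SigmaComplex

-- `v.1 k` is the coefficient of `e_k` and `v.2 k` that of `Je_k`; `iL k` is `i_{k+1}`.
abbrev Chains (n : ℕ) := (Fin (n + 1) → 𝔽₂[X]) × (Fin n → 𝔽₂[X])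

variable {n : ℕ}

/-- `∂ v = ∑ₖ U^{i_{k+1}} (boundaryCoeff v k) (e_k + Je_k)`, the absent `Je_n` counting as `0`. -/
def boundaryCoeff (v : Chains n) (k : Fin n) : 𝔽₂[X] :=
  v.1 k.succ + if h : (k : ℕ) + 1 < n then v.2 ⟨(k : ℕ) + 1, h⟩ else 0

theorem boundaryCoeff_add (v w : Chains n) :
    boundaryCoeff (v + w) = boundaryCoeff v + boundaryCoeff w := by
  funext k
  simp only [boundaryCoeff, Prod.fst_add, Prod.snd_add, Pi.add_apply]
  split_ifs <;> ring

theorem boundaryCoeff_smul (p : 𝔽₂[X]) (v : Chains n) :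
    boundaryCoeff (p • v) = p • boundaryCoeff v := by
  funext k
  simp only [boundaryCoeff, Prod.smul_fst, Prod.smul_snd, Pi.smul_apply, smul_eq_mul]
  split_ifs <;> ring

variable (n) in
def differential (iL : Fin n → ℕ) : Chains n →ₗ[𝔽₂[X]] Chains n where
  toFun v := (fun j => if h : (j : ℕ) < n then X ^ iL ⟨j, h⟩ * boundaryCoeff v ⟨j, h⟩ else 0,
    fun k => X ^ iL k * boundaryCoeff v k)
  map_add' v w := by
    ext j : 2 <;> simp only [boundaryCoeff_add, Pi.add_apply, Prod.fst_add, Prod.snd_add, mul_add]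
    split_ifs <;> simp
  map_smul' p v := by
    ext j : 2 <;> simp only [boundaryCoeff_smul, Pi.smul_apply, Prod.smul_fst, Prod.smul_snd,
      smul_eq_mul, RingHom.id_apply]
    · split_ifs <;> ring
    · ring

variable (iL : Fin n → ℕ)

theorem mem_ker_differential {v : Chains n} :
    v ∈ ker (differential n iL) ↔ boundaryCoeff v = 0 := by
  refine ⟨fun hv => funext fun k => ?_, fun hv => ?_⟩
  · have := congr_fun (congrArg Prod.snd (mem_ker.mp hv)) k
    exact (mul_eq_zero.mp this).resolve_left (pow_ne_zero _ X_ne_zero)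
  · ext j : 2 <;> simp [differential, hv]

variable (n) in
def augmentation (hn : 0 < n) : Chains n →ₗ[𝔽₂[X]] 𝔽₂[X] :=
  coprod (proj 0) (proj ⟨0, hn⟩)

theorem augmentation_apply (hn : 0 < n) (v : Chains n) :
    augmentation n hn v = v.1 0 + v.2 ⟨0, hn⟩ :=
  rfl

theorem augmentation_comp_differential (hn : 0 < n) :
    augmentation n hn ∘ₗ differential n iL = 0 := by
  refine LinearMap.ext fun v => ?_
  simp [augmentation_apply, differential, hn, CharTwo.add_self_eq_zero]

theorem cycle_fst_eq (hn : 0 < n) {v : Chains n} (hv : v ∈ ker (differential n iL))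
    (hφ : augmentation n hn v = 0) (j : Fin (n + 1)) :
    v.1 j = if h : (j : ℕ) < n then v.2 ⟨j, h⟩ else 0 := by
  rw [mem_ker_differential] at hv
  induction j using Fin.cases with
  | zero => simpa [hn, augmentation_apply, CharTwo.add_eq_zero] using hφ
  | succ k => simpa [boundaryCoeff, CharTwo.add_eq_zero] using congr_fun hv k

/-- `U^{i₁} (e_k + Je_k) = ∂ (U^{i₁ - i_{k+1}} e_{k+1})`, as `i₁ ≥ i_{k+1}`. -/
theorem X_pow_smul_mem_range (hn : 0 < n) (hmono : ∀ j k : Fin n, j ≤ k → iL k ≤ iL j)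
    {v : Chains n} (hv : v ∈ ker (differential n iL)) (hφ : augmentation n hn v = 0) :
    (X : 𝔽₂[X]) ^ iL ⟨0, hn⟩ • v ∈ range (differential n iL) := by
  have hpow (k : Fin n) : X ^ iL k * X ^ (iL ⟨0, hn⟩ - iL k) = (X : 𝔽₂[X]) ^ iL ⟨0, hn⟩ := by
    rw [← pow_add, Nat.add_sub_cancel' (hmono _ _ (Nat.zero_le _))]
  refine ⟨(Fin.cases 0 fun k => X ^ (iL ⟨0, hn⟩ - iL k) * v.2 k, 0), ?_⟩
  ext j : 2 <;> simp [differential, boundaryCoeff, cycle_fst_eq iL hn hv hφ, ← mul_assoc, hpow]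

variable (n) in
def homologyAugmentation (hn : 0 < n) : Hmlgy (differential n iL) →ₗ[𝔽₂[X]] 𝔽₂[X] :=
  Hmlgy.lift (augmentation n hn) (augmentation_comp_differential iL hn)

theorem ker_homologyAugmentation_le (hn : 0 < n) (hmono : ∀ j k : Fin n, j ≤ k → iL k ≤ iL j) :
    ker (homologyAugmentation n iL hn) ≤ torsionBy 𝔽₂[X] _ (X ^ iL ⟨0, hn⟩) := by
  intro x hx
  obtain ⟨⟨v, hv⟩, rfl⟩ := Submodule.Quotient.mk_surjective _ x
  rw [mem_torsionBy_iff, ← Submodule.Quotient.mk_smul, Submodule.Quotient.mk_eq_zero]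
  exact X_pow_smul_mem_range iL hn hmono hv hx

end SigmaComplex

open SigmaComplex in
theorem stmt13_general (n : ℕ) (hn : 0 < n) (iL : Fin n → ℕ)
    (hmono : ∀ j k : Fin n, j ≤ k → iL k ≤ iL j)
    (d : ((Fin (n + 1) → Polynomial (ZMod 2)) × (Fin n → Polynomial (ZMod 2)))
      →ₗ[Polynomial (ZMod 2)]
      ((Fin (n + 1) → Polynomial (ZMod 2)) × (Fin n → Polynomial (ZMod 2))))
    (hd : ∀ v, d v =
      (fun j : Fin (n + 1) => if h : (j : ℕ) < n then
          X ^ (iL ⟨(j : ℕ), h⟩) * (v.1 (Fin.succ ⟨(j : ℕ), h⟩) +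
            if h2 : (j : ℕ) + 1 < n then v.2 ⟨(j : ℕ) + 1, h2⟩ else 0)
        else 0,
       fun k : Fin n =>
          X ^ (iL k) * (v.1 (Fin.succ k) +
            if h2 : (k : ℕ) + 1 < n then v.2 ⟨(k : ℕ) + 1, h2⟩ else 0)))
    (e₀ : (Fin (n + 1) → Polynomial (ZMod 2)) × (Fin n → Polynomial (ZMod 2)))
    (he₀ : e₀ = (Pi.single 0 1, 0)) :
    ∃ hcyc : e₀ ∈ LinearMap.ker d,
    (∃ ψ : (Hmlgy d ⧸ Submodule.torsion (Polynomial (ZMod 2)) (Hmlgy d))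
        ≃ₗ[Polynomial (ZMod 2)] Polynomial (ZMod 2),
      ψ (Submodule.Quotient.mk
          ((Submodule.Quotient.mk (⟨e₀, hcyc⟩ : LinearMap.ker d)) : Hmlgy d)) = 1) ∧
    Nonempty
      (LocalizedModule (Submonoid.powers (X : Polynomial (ZMod 2))) (Hmlgy d)
        ≃ₗ[Polynomial (ZMod 2)]
       LocalizedModule (Submonoid.powers (X : Polynomial (ZMod 2))) (Polynomial (ZMod 2))) := by
  obtain rfl : d = differential n iL := LinearMap.ext hd
  subst he₀
  have hcyc : ((Pi.single 0 1, 0) : Chains n) ∈ ker (differential n iL) := by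
    rw [mem_ker_differential]
    funext k
    simp [boundaryCoeff]
  set Φ := homologyAugmentation n iL hn
  have hΦe₀ : Φ (Submodule.Quotient.mk ⟨_, hcyc⟩) = 1 := by
    simp [Φ, homologyAugmentation, augmentation_apply]
  have hsurj : Function.Surjective Φ := fun p =>
    ⟨p • Submodule.Quotient.mk ⟨_, hcyc⟩, by rw [map_smul, hΦe₀, smul_eq_mul, mul_one]⟩
  have hker := ker_homologyAugmentation_le iL hn hmono
  have hker_torsion : ker Φ ≤ torsion 𝔽₂[X] _ := hker.trans <|
    torsionBy_le_torsion' (mem_nonZeroDivisors_of_ne_zero (pow_ne_zero _ X_ne_zero))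
  have hker_powers : ker Φ ≤ torsion' 𝔽₂[X] _ (Submonoid.powers X) := hker.trans <|
    torsionBy_le_torsion' (pow_mem (Submonoid.mem_powers X) _)
  have hR : torsion 𝔽₂[X] 𝔽₂[X] = ⊥ := isTorsionFree_iff_torsion_eq_bot.mp inferInstance
  refine ⟨hcyc, ⟨Φ.quotTorsionEquivOfSurjective hR hsurj hker_torsion, by simpa using hΦe₀⟩,
    ⟨.ofBijective _ (IsLocalizedModule.map_bijective_of_ker_le_torsion' _
      (LocalizedModule.mkLinearMap _ _) (LocalizedModule.mkLinearMap _ _) Φ hsurj hker_powers)⟩⟩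

theorem stmt13 (n : ℕ) (hn : 0 < n) (iL : Fin n → ℕ)
    (hi1 : ∀ k, 1 ≤ iL k) (hmono : ∀ j k : Fin n, j ≤ k → iL k ≤ iL j)
    (d : ((Fin (n + 1) → Polynomial (ZMod 2)) × (Fin n → Polynomial (ZMod 2)))
      →ₗ[Polynomial (ZMod 2)]
      ((Fin (n + 1) → Polynomial (ZMod 2)) × (Fin n → Polynomial (ZMod 2))))
    (hd : ∀ v, d v =
      (fun j : Fin (n + 1) => if h : (j : ℕ) < n then
          X ^ (iL ⟨(j : ℕ), h⟩) * (v.1 (Fin.succ ⟨(j : ℕ), h⟩) +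
            if h2 : (j : ℕ) + 1 < n then v.2 ⟨(j : ℕ) + 1, h2⟩ else 0)
        else 0,
       fun k : Fin n =>
          X ^ (iL k) * (v.1 (Fin.succ k) +
            if h2 : (k : ℕ) + 1 < n then v.2 ⟨(k : ℕ) + 1, h2⟩ else 0)))
    (e₀ : (Fin (n + 1) → Polynomial (ZMod 2)) × (Fin n → Polynomial (ZMod 2)))
    (he₀ : e₀ = (Pi.single 0 1, 0)) :
    ∃ hcyc : e₀ ∈ LinearMap.ker d,
    (∃ ψ : (Hmlgy d ⧸ Submodule.torsion (Polynomial (ZMod 2)) (Hmlgy d))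
        ≃ₗ[Polynomial (ZMod 2)] Polynomial (ZMod 2),
      ψ (Submodule.Quotient.mk
          ((Submodule.Quotient.mk (⟨e₀, hcyc⟩ : LinearMap.ker d)) : Hmlgy d)) = 1) ∧
    Nonempty
      (LocalizedModule (Submonoid.powers (X : Polynomial (ZMod 2))) (Hmlgy d)
        ≃ₗ[Polynomial (ZMod 2)]
       LocalizedModule (Submonoid.powers (X : Polynomial (ZMod 2))) (Polynomial (ZMod 2))) :=
  stmt13_general n hn iL hmono d hd e₀ he₀
end
end

section
/- Recoverability of the decomposition: let X = Σ_k c_k X_{i_k} be maximally simplified with i₁ > ... > i_m the distinct lengths and multiplicities a_l (the number of towers of length l, with common sign per length since X is maximally simplified). Then the graded F₂[U]-module H(X) produced by the concatenation algorithm determines the multiset {(i_k, c_k)}: distinct inputs (maximally simplified sign-coefficient sequences) produce non-isomorphic graded modules H(X) (given the normalization that either the top tower's head is in grading 0 with positive sign or grading 1 with negative sign). -/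
/-!
Recoverability of the decomposition.  A maximally simplified linear combination
`X = Σ_k c_k X_{i_k}` is encoded as a list `L` of pairs `(i_k, c_k)` with
`i_k ≥ 1`, `c_k = ±1`, sorted with weakly decreasing lengths, and with a common
sign for towers of equal length (no cancelling pairs).  The graded `F₂[U]`-module
`H(X)` produced by the concatenation algorithm is a direct sum of torsion towers
`T_d(l)`, and its graded isomorphism class is recorded as the multiset of pairs
`(top grading, length)` computed by `towerModule` below (a downwards tower of
length `l` with head at grading `h` has top grading `h`; an upwards one has top
grading `tail = h + 2(l-1)`; the first head is at grading `0` if `c₁ = +1` and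
`1` if `c₁ = -1`, and subsequent heads follow the algorithm of Theorem 1.1).
Claim: distinct maximally simplified inputs produce non-isomorphic graded
modules, i.e. `towerModule` is injective on valid inputs.
-/

noncomputable section

/-- Tail grading of a tower of length `l`, sign `c`, with head at grading `h`. -/
def tailGr (h : ℤ) (l : ℕ) (c : ℤ) : ℤ := h - c * 2 * ((l : ℤ) - 1)

/-- Head grading of the next tower, given the previous tail `t` and the two signs. -/
def nextHead (t c c' : ℤ) : ℤ :=
  t + (if c = 1 ∧ c' = 1 then -1 else if c = -1 ∧ c' = -1 then 1 else 0)

/-- The multiset of (top grading, length) pairs of the towers, given the head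
grading of the first tower. -/
def towersAux : ℤ → List (ℕ × ℤ) → Multiset (ℤ × ℕ)
  | _, [] => 0
  | h, (l, c) :: rest =>
      ((if c = 1 then h else tailGr h l c), l) ::ₘ
        towersAux
          (match rest with
           | [] => 0
           | (_, c') :: _ => nextHead (tailGr h l c) c c') rest

/-- The graded module `H(X)` (as a multiset of towers), with the normalization
that the first head is at grading `0` for a positive first sign and `1` for a
negative one. -/
def towerModule (L : List (ℕ × ℤ)) : Multiset (ℤ × ℕ) :=
  towersAux (match L with | [] => 0 | (_, c) :: _ => if c = 1 then 0 else 1) L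

/-- A valid input: positive lengths, signs `±1`, weakly decreasing lengths, and
maximally simplified (equal lengths have equal signs). -/
def validInput (L : List (ℕ × ℤ)) : Prop :=
  (∀ p ∈ L, 1 ≤ p.1 ∧ (p.2 = 1 ∨ p.2 = -1)) ∧
  L.Chain' (fun p q => q.1 ≤ p.1) ∧
  (∀ p ∈ L, ∀ q ∈ L, p.1 = q.1 → p.2 = q.2)

/-!
Run the algorithm relative to a base grading `b`: a positive tower starts at `b`, a negative one
at `b + 1`. Then the next base is `b - c (2l - 1)` whatever the sign of the next tower, so `H(X)`
peels off one tower at a time. The lengths of the towers are read off `H(X)`, hence so is the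
longest length `l`. Its sign is forced: a positive first tower has top `(b, l)`, whereas if all
towers of length `l` are negative (they come first), all their tops lie strictly above `b`.
Removing the first tower and shifting the base, induction on the list finishes the proof.
-/

namespace validInput

variable {l : ℕ} {c : ℤ} {T : List (ℕ × ℤ)}

theorem tail (hv : validInput ((l, c) :: T)) : validInput T :=
  ⟨fun p hp => hv.1 p (List.mem_cons_of_mem _ hp), (List.isChain_cons.1 hv.2.1).2,
    fun p hp q hq => hv.2.2 p (List.mem_cons_of_mem _ hp) q (List.mem_cons_of_mem _ hq)⟩

theorem fst_le_head (hv : validInput ((l, c) :: T)) : ∀ p ∈ (l, c) :: T, p.1 ≤ l := by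
  have hsorted : ((l, c) :: T).map Prod.fst |>.Pairwise (· ≥ ·) :=
    List.isChain_iff_pairwise.1 (List.isChain_map _ |>.2 hv.2.1)
  intro p hp
  rcases List.mem_cons.1 hp with rfl | hp
  · exact le_rfl
  · exact (List.pairwise_cons.1 hsorted).1 _ (List.mem_map_of_mem hp)

end validInput

def leadSign : List (ℕ × ℤ) → ℤ
  | [] => 1
  | (_, c) :: _ => c

def headAt (b c : ℤ) : ℤ := if c = 1 then b else b + 1

def topAt (b c : ℤ) (l : ℕ) : ℤ := if c = 1 then b else b + 2 * l - 1

def towersFrom (b : ℤ) (L : List (ℕ × ℤ)) : Multiset (ℤ × ℕ) :=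
  towersAux (headAt b (leadSign L)) L

theorem towerModule_eq_towersFrom (L : List (ℕ × ℤ)) : towerModule L = towersFrom 0 L := by
  rcases L with _ | ⟨⟨l, c⟩, T⟩
  · rfl
  · by_cases hc : c = 1 <;> simp [towerModule, towersFrom, leadSign, headAt, hc]

theorem map_snd_towersAux (L : List (ℕ × ℤ)) (h : ℤ) :
    (towersAux h L).map Prod.snd = L.map Prod.fst := by
  induction L generalizing h with
  | nil => rfl
  | cons p T ih => simp [towersAux, ih]

theorem map_snd_towersFrom (L : List (ℕ × ℤ)) (b : ℤ) :
    (towersFrom b L).map Prod.snd = L.map Prod.fst :=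
  map_snd_towersAux L _

theorem top_eq_topAt {b c : ℤ} (l : ℕ) (hc : c = 1 ∨ c = -1) :
    (if c = 1 then headAt b c else tailGr (headAt b c) l c) = topAt b c l := by
  grind [headAt, topAt, tailGr]

theorem nextHead_eq_headAt {b c c' : ℤ} (l : ℕ) (hc : c = 1 ∨ c = -1) (hc' : c' = 1 ∨ c' = -1) :
    nextHead (tailGr (headAt b c) l c) c c' = headAt (b - c * (2 * l - 1)) c' := by
  grind [headAt, tailGr, nextHead]

theorem towersFrom_cons {b c : ℤ} {l : ℕ} {T : List (ℕ × ℤ)} (hc : c = 1 ∨ c = -1)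
    (hT : ∀ p ∈ T, p.2 = 1 ∨ p.2 = -1) :
    towersFrom b ((l, c) :: T) = (topAt b c l, l) ::ₘ towersFrom (b - c * (2 * l - 1)) T := by
  simp only [towersFrom, leadSign, towersAux, top_eq_topAt l hc]
  rcases T with _ | ⟨⟨l', c'⟩, T⟩
  · rfl
  · exact congrArg (_ ::ₘ towersAux · _) (nextHead_eq_headAt l hc (hT _ List.mem_cons_self))

theorem towersFrom_cons_of_valid {b c : ℤ} {l : ℕ} {T : List (ℕ × ℤ)}
    (hv : validInput ((l, c) :: T)) :
    towersFrom b ((l, c) :: T) = (topAt b c l, l) ::ₘ towersFrom (b - c * (2 * l - 1)) T :=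
  towersFrom_cons (hv.1 _ List.mem_cons_self).2 fun p hp => (hv.1 p (List.mem_cons_of_mem _ hp)).2

theorem mem_map_fst_of_mem_towersFrom {b : ℤ} {L : List (ℕ × ℤ)} {q : ℤ × ℕ}
    (hq : q ∈ towersFrom b L) : q.2 ∈ L.map Prod.fst := by
  have := Multiset.mem_map_of_mem Prod.snd hq
  rwa [map_snd_towersFrom, Multiset.mem_coe] at this

theorem mem_towersFrom_of_pos (b : ℤ) (l : ℕ) (T : List (ℕ × ℤ)) :
    (b, l) ∈ towersFrom b ((l, 1) :: T) := by
  simp [towersFrom, towersAux, leadSign, headAt]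

theorem lt_fst_of_mem_towersFrom_of_neg {l : ℕ} (hl : 1 ≤ l) {L : List (ℕ × ℤ)}
    (hv : validInput L) (hle : ∀ p ∈ L, p.1 ≤ l) (hneg : ∀ p ∈ L, p.1 = l → p.2 = -1) (b : ℤ)
    {q : ℤ × ℕ} (hq : q ∈ towersFrom b L) (hql : q.2 = l) : b < q.1 := by
  induction L generalizing b with
  | nil => simp [towersFrom, towersAux] at hq
  | cons p T ih =>
    obtain ⟨l', c'⟩ := p
    obtain rfl | hlt := (hle _ List.mem_cons_self).eq_or_lt
    · have hc' : c' = -1 := hneg _ List.mem_cons_self rfl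
      subst hc'
      rw [towersFrom_cons_of_valid hv, Multiset.mem_cons] at hq
      rcases hq with rfl | hq
      · simp only [topAt]
        omega
      · have := ih hv.tail (fun p hp => hle p (List.mem_cons_of_mem _ hp))
          (fun p hp => hneg p (List.mem_cons_of_mem _ hp)) _ hq
        omega
    · obtain ⟨p, hp, hpq⟩ := List.mem_map.1 (mem_map_fst_of_mem_towersFrom hq)
      have := hv.fst_le_head p hp
      omega

theorem towersFrom_pos_ne_neg {b : ℤ} {l : ℕ} {T₁ T₂ : List (ℕ × ℤ)}
    (hv : validInput ((l, -1) :: T₂)) :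
    towersFrom b ((l, 1) :: T₁) ≠ towersFrom b ((l, -1) :: T₂) := by
  intro heq
  have hmem := heq ▸ mem_towersFrom_of_pos b l T₁
  have := lt_fst_of_mem_towersFrom_of_neg (hv.1 _ List.mem_cons_self).1 hv hv.fst_le_head
    (fun p hp hpl => hv.2.2 p hp _ List.mem_cons_self hpl) b hmem rfl
  exact lt_irrefl b this

theorem fst_eq_of_towersFrom_eq {b : ℤ} {l₁ l₂ : ℕ} {c₁ c₂ : ℤ} {T₁ T₂ : List (ℕ × ℤ)}
    (hv₁ : validInput ((l₁, c₁) :: T₁)) (hv₂ : validInput ((l₂, c₂) :: T₂))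
    (heq : towersFrom b ((l₁, c₁) :: T₁) = towersFrom b ((l₂, c₂) :: T₂)) : l₁ = l₂ := by
  have hfst := congrArg (Multiset.map Prod.snd) heq
  simp only [map_snd_towersFrom, Multiset.coe_eq_coe] at hfst
  have h₁ : l₁ ∈ ((l₂, c₂) :: T₂).map Prod.fst := hfst.subset (by simp)
  have h₂ : l₂ ∈ ((l₁, c₁) :: T₁).map Prod.fst := hfst.symm.subset (by simp)
  obtain ⟨p₁, hp₁, rfl⟩ := List.mem_map.1 h₁
  obtain ⟨p₂, hp₂, hp₂l⟩ := List.mem_map.1 h₂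
  exact le_antisymm (hv₂.fst_le_head p₁ hp₁) (hp₂l ▸ hv₁.fst_le_head p₂ hp₂)

theorem snd_eq_of_towersFrom_eq {b : ℤ} {l : ℕ} {c₁ c₂ : ℤ} {T₁ T₂ : List (ℕ × ℤ)}
    (hv₁ : validInput ((l, c₁) :: T₁)) (hv₂ : validInput ((l, c₂) :: T₂))
    (heq : towersFrom b ((l, c₁) :: T₁) = towersFrom b ((l, c₂) :: T₂)) : c₁ = c₂ := by
  rcases (hv₁.1 _ List.mem_cons_self).2 with rfl | rfl <;>
    rcases (hv₂.1 _ List.mem_cons_self).2 with rfl | rfl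
  · rfl
  · exact absurd heq (towersFrom_pos_ne_neg hv₂)
  · exact absurd heq.symm (towersFrom_pos_ne_neg hv₁)
  · rfl

theorem eq_of_towersFrom_eq {b : ℤ} {L₁ L₂ : List (ℕ × ℤ)} (hv₁ : validInput L₁)
    (hv₂ : validInput L₂) (heq : towersFrom b L₁ = towersFrom b L₂) : L₁ = L₂ := by
  induction L₁ generalizing b L₂ with
  | nil =>
    rcases L₂ with _ | ⟨⟨l₂, c₂⟩, T₂⟩
    · rfl
    · exact absurd heq.symm (by simp [towersFrom, towersAux])
  | cons p₁ T₁ ih =>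
    obtain ⟨l₁, c₁⟩ := p₁
    rcases L₂ with _ | ⟨⟨l₂, c₂⟩, T₂⟩
    · exact absurd heq (by simp [towersFrom, towersAux])
    obtain rfl := fst_eq_of_towersFrom_eq hv₁ hv₂ heq
    obtain rfl := snd_eq_of_towersFrom_eq hv₁ hv₂ heq
    rw [towersFrom_cons_of_valid hv₁, towersFrom_cons_of_valid hv₂, Multiset.cons_inj_right] at heq
    rw [ih hv₁.tail hv₂.tail heq]

theorem stmt18 (L₁ L₂ : List (ℕ × ℤ)) (h₁ : validInput L₁) (h₂ : validInput L₂)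
    (h : towerModule L₁ = towerModule L₂) : L₁ = L₂ := by
  rw [towerModule_eq_towersFrom, towerModule_eq_towersFrom] at h
  exact eq_of_towersFrom_eq h₁ h₂ h
end
end
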